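/- arXiv:2311.17704 — 11 statements merged into one kernel-verified Lean document; each statement's English description precedes it below -/
import Mathlib

section
/- Let u : Fin n → ℝ and v : Fin m → ℝ be strictly increasing, and define δ(i,j) = |u i − v (j+1)| + |u (i+1) − v j| − |u i − v j| − |u (i+1) − v (j+1)| for i ∈ {1,…,n−1}, j ∈ {1,…,m−1}. If δ(i,j) ≠ 0, then for all (k,l) with (k < i and l > j) or (k > i and l < j), δ(k,l) = 0. -/
theorem delta_support_antichain (n m : ℕ) (u v : ℕ → ℝ)
    (hu : StrictMono u) (hv : StrictMono v)
    (δ : ℕ → ℕ → ℝ)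
    (hδ : ∀ i j, δ i j =
      |u i - v (j+1)| + |u (i+1) - v j| - |u i - v j| - |u (i+1) - v (j+1)|)
    (i j : ℕ) (hi : 1 ≤ i ∧ i ≤ n - 1) (hj : 1 ≤ j ∧ j ≤ m - 1)
    (hne : δ i j ≠ 0) :
    ∀ k l, 1 ≤ k → k ≤ n - 1 → 1 ≤ l → l ≤ m - 1 →
      ((k < i ∧ j < l) ∨ (i < k ∧ l < j)) → δ k l = 0 := by
  -- helper: if u (k+1) ≤ v l then δ k l = 0
  have left : ∀ k l, u (k+1) ≤ v l → δ k l = 0 := by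
    intro k l h
    have h1 : u k < v l := lt_of_lt_of_le (hu (Nat.lt_succ_self k)) h
    have h2 : u k < v (l+1) := h1.trans (hv (Nat.lt_succ_self l))
    have h3 : u (k+1) ≤ v (l+1) := h.trans (hv (Nat.lt_succ_self l)).le
    rw [hδ, abs_of_nonpos (by linarith), abs_of_nonpos (by linarith),
      abs_of_nonpos (by linarith), abs_of_nonpos (by linarith)]
    ring
  -- helper: if v (l+1) ≤ u k then δ k l = 0
  have right : ∀ k l, v (l+1) ≤ u k → δ k l = 0 := by
    intro k l h
    have h1 : v l < u k := lt_of_lt_of_le (hv (Nat.lt_succ_self l)) h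
    have h2 : v l < u (k+1) := h1.trans (hu (Nat.lt_succ_self k))
    have h3 : v (l+1) ≤ u (k+1) := h.trans (hu (Nat.lt_succ_self k)).le
    rw [hδ, abs_of_nonneg (by linarith), abs_of_nonneg (by linarith),
      abs_of_nonneg (by linarith), abs_of_nonneg (by linarith)]
    ring
  intro k l _ _ _ _ hkl
  rcases hkl with ⟨hk, hl⟩ | ⟨hk, hl⟩
  · -- k < i, j < l: u (k+1) ≤ u i < v (j+1) ≤ v l
    have huv : u i < v (j+1) := by
      by_contra h
      exact hne (right i j (not_lt.mp h))
    exact left k l ((hu.monotone hk).trans (huv.trans_le (hv.monotone hl)).le)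
  · -- i < k, l < j: v (l+1) ≤ v j < u (i+1) ≤ u k
    have huv : v j < u (i+1) := by
      by_contra h
      exact hne (left i j (not_lt.mp h))
    exact right k l ((hv.monotone hl).trans (huv.trans_le (hu.monotone hk)).le)
end

section
/- Let u : Fin n → ℝ and v : Fin m → ℝ be strictly increasing and define δ(i,j) as above for 1 ≤ i ≤ n−1, 1 ≤ j ≤ m−1. Then on each anti-diagonal {(i,j) : i + j = s} there is at most one pair with δ(i,j) ≠ 0; consequently the total number of pairs (i,j) with δ(i,j) ≠ 0 is at most n + m − 3. -/
/-!
If `δ(i,j) ≠ 0`, the intervals `[u i, u (i+1)]` and `[v j, v (j+1)]` must overlap: otherwise all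
four differences in `δ(i,j)` have the same sign and cancel. Two cells `(i,j)`, `(k,l)` with `i < k`
on one anti-diagonal have `l < j`, so `[u k, u (k+1)]` lies to the right of `[u i, u (i+1)]` while
`[v l, v (l+1)]` lies to the left of `[v j, v (j+1)]`; both overlaps together force
`u k < v (l+1) ≤ v j < u (i+1) ≤ u k`. Hence `(i,j) ↦ i + j` is injective on the support of `δ`,
and it takes at most `n + m - 3` values there.
-/

open Finset

section Preorder

variable {α : Type*} [Preorder α] {u v : ℕ → α}

def CellsOverlap (u v : ℕ → α) (i j : ℕ) : Prop :=
  u i < v (j + 1) ∧ v j < u (i + 1)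

theorem CellsOverlap.eq_of_add_eq (hu : Monotone u) (hv : Monotone v) {i j k l : ℕ}
    (hij : CellsOverlap u v i j) (hkl : CellsOverlap u v k l) (hs : i + j = k + l) :
    (i, j) = (k, l) := by
  wlog hik : i ≤ k generalizing i j k l
  · exact (this hkl hij hs.symm (le_of_not_ge hik)).symm
  obtain rfl | hik := hik.eq_or_lt
  · rw [Nat.add_left_cancel hs]
  · have hui : u (i + 1) ≤ u k := hu hik
    have hvl : v (l + 1) ≤ v j := hv (by omega)
    exact absurd (hkl.1.trans_le hvl |>.trans hij.2 |>.trans_le hui) (lt_irrefl _)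

end Preorder

section LinearOrderedAddCommGroup

variable {α : Type*} [AddCommGroup α] [LinearOrder α] [IsOrderedAddMonoid α]

theorem lt_and_lt_of_abs_sub_cross_ne_zero {a b c d : α} (hab : a ≤ b) (hcd : c ≤ d)
    (h : |a - d| + |b - c| - |a - c| - |b - d| ≠ 0) : a < d ∧ c < b := by
  by_contra! hcross
  refine h ?_
  by_cases had : a < d
  · have hbc := hcross had
    rw [abs_of_nonpos (sub_nonpos.mpr had.le), abs_of_nonpos (sub_nonpos.mpr hbc),
      abs_of_nonpos (sub_nonpos.mpr (hab.trans hbc)),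
      abs_of_nonpos (sub_nonpos.mpr (hbc.trans hcd))]
    abel
  · have hda := not_lt.mp had
    rw [abs_of_nonneg (sub_nonneg.mpr hda),
      abs_of_nonneg (sub_nonneg.mpr (hcd.trans (hda.trans hab))),
      abs_of_nonneg (sub_nonneg.mpr (hcd.trans hda)),
      abs_of_nonneg (sub_nonneg.mpr (hda.trans hab))]
    abel

def crossDefect (u v : ℕ → α) (i j : ℕ) : α :=
  |u i - v (j + 1)| + |u (i + 1) - v j| - |u i - v j| - |u (i + 1) - v (j + 1)|

theorem cellsOverlap_of_crossDefect_ne_zero {u v : ℕ → α} (hu : Monotone u) (hv : Monotone v)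
    {i j : ℕ} (h : crossDefect u v i j ≠ 0) : CellsOverlap u v i j :=
  lt_and_lt_of_abs_sub_cross_ne_zero (hu i.le_succ) (hv j.le_succ) h

end LinearOrderedAddCommGroup

theorem card_le_of_injOn_add {n m : ℕ} {s : Finset (ℕ × ℕ)}
    (hs : s ⊆ Icc 1 (n - 1) ×ˢ Icc 1 (m - 1))
    (hinj : Set.InjOn (fun p : ℕ × ℕ => p.1 + p.2) s) :
    #s ≤ n + m - 3 := by
  have hmaps : Set.MapsTo (fun p : ℕ × ℕ => p.1 + p.2) s (Icc 2 (n + m - 2)) := by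
    intro p hp
    have hp' := mem_product.mp (hs hp)
    simp only [mem_Icc] at hp'
    simp only [coe_Icc, Set.mem_Icc]
    omega
  calc #s ≤ #(Icc 2 (n + m - 2)) := card_le_card_of_injOn _ hmaps hinj
    _ = n + m - 3 := by rw [Nat.card_Icc]; omega

theorem delta_support_card_bound_general (n m : ℕ)
    (u v : ℕ → ℝ) (hu : StrictMono u) (hv : StrictMono v)
    (δ : ℕ → ℕ → ℝ)
    (hδ : ∀ i j, δ i j =
      |u i - v (j+1)| + |u (i+1) - v j| - |u i - v j| - |u (i+1) - v (j+1)|) :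
    (∀ i j k l, 1 ≤ i → i ≤ n - 1 → 1 ≤ j → j ≤ m - 1 →
        1 ≤ k → k ≤ n - 1 → 1 ≤ l → l ≤ m - 1 →
        δ i j ≠ 0 → δ k l ≠ 0 → i + j = k + l → (i, j) = (k, l)) ∧
    (((Finset.Icc 1 (n-1)) ×ˢ (Finset.Icc 1 (m-1))).filter
        (fun p => δ p.1 p.2 ≠ 0)).card ≤ n + m - 3 := by
  obtain rfl : δ = crossDefect u v := funext₂ hδ
  have hoverlap {i j : ℕ} : crossDefect u v i j ≠ 0 → CellsOverlap u v i j :=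
    cellsOverlap_of_crossDefect_ne_zero hu.monotone hv.monotone
  refine ⟨fun i j k l _ _ _ _ _ _ _ _ hij hkl hs =>
    (hoverlap hij).eq_of_add_eq hu.monotone hv.monotone (hoverlap hkl) hs, ?_⟩
  refine card_le_of_injOn_add (filter_subset _ _) fun p hp q hq hs => ?_
  exact (hoverlap (mem_filter.mp hp).2).eq_of_add_eq hu.monotone hv.monotone
    (hoverlap (mem_filter.mp hq).2) hs

theorem delta_support_card_bound (n m : ℕ) (hn : 2 ≤ n) (hm : 2 ≤ m)
    (u v : ℕ → ℝ) (hu : StrictMono u) (hv : StrictMono v)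
    (δ : ℕ → ℕ → ℝ)
    (hδ : ∀ i j, δ i j =
      |u i - v (j+1)| + |u (i+1) - v j| - |u i - v j| - |u (i+1) - v (j+1)|) :
    (∀ i j k l, 1 ≤ i → i ≤ n - 1 → 1 ≤ j → j ≤ m - 1 →
        1 ≤ k → k ≤ n - 1 → 1 ≤ l → l ≤ m - 1 →
        δ i j ≠ 0 → δ k l ≠ 0 → i + j = k + l → (i, j) = (k, l)) ∧
    (((Finset.Icc 1 (n-1)) ×ˢ (Finset.Icc 1 (m-1))).filter
        (fun p => δ p.1 p.2 ≠ 0)).card ≤ n + m - 3 :=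
  delta_support_card_bound_general n m u v hu hv δ hδ
end

section
/- If δ(i,j) ≠ 0 and δ(k,l) ≠ 0 with (i,j) ≠ (k,l) and i + j = k + l, then a contradiction follows; equivalently, δ(i,j) ≠ 0 and δ(k,l) ≠ 0 with i + j = k + l implies (i,j) = (k,l). -/
theorem delta_antidiagonal_unique (u v : ℕ → ℝ)
    (hu : StrictMono u) (hv : StrictMono v)
    (δ : ℕ → ℕ → ℝ)
    (hδ : ∀ i j, δ i j =
      |u i - v (j+1)| + |u (i+1) - v j| - |u i - v j| - |u (i+1) - v (j+1)|)
    (i j k l : ℕ) (hij : δ i j ≠ 0) (hkl : δ k l ≠ 0) (hsum : i + j = k + l) :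
    (i, j) = (k, l) := by
  have key : ∀ a b : ℕ, δ a b ≠ 0 → v b < u (a+1) ∧ u a < v (b+1) := by
    intro a b h
    constructor
    · by_contra hle
      push_neg at hle
      apply h
      rw [hδ]
      have h1 : u a < v b := lt_of_lt_of_le (hu (Nat.lt_succ_self a)) hle
      have h2 : v b < v (b+1) := hv (Nat.lt_succ_self b)
      rw [abs_of_nonpos (by linarith), abs_of_nonpos (by linarith),
        abs_of_nonpos (by linarith), abs_of_nonpos (by linarith)]
      ring
    · by_contra hle
      push_neg at hle
      apply h
      rw [hδ]
      have h1 : v (b+1) ≤ u a := hle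
      have h2 : v b < v (b+1) := hv (Nat.lt_succ_self b)
      have h3 : u a < u (a+1) := hu (Nat.lt_succ_self a)
      rw [abs_of_nonneg (by linarith), abs_of_nonneg (by linarith),
        abs_of_nonneg (by linarith), abs_of_nonneg (by linarith)]
      ring
  obtain ⟨h1, h2⟩ := key i j hij
  obtain ⟨h3, h4⟩ := key k l hkl
  rcases lt_trichotomy i k with h | h | h
  · exfalso
    have hl : l + 1 ≤ j := by omega
    have : u (i+1) ≤ u k := hu.le_iff_le.mpr (by omega)
    have : v (l+1) ≤ v j := hv.le_iff_le.mpr hl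
    linarith
  · have : j = l := by omega
    simp [h, this]
  · exfalso
    have hj : j + 1 ≤ l := by omega
    have : u (k+1) ≤ u i := hu.le_iff_le.mpr (by omega)
    have : v (j+1) ≤ v l := hv.le_iff_le.mpr hj
    linarith
end

section
/- For strictly increasing u and v, δ(i,j) ≠ 0 implies the open intervals (u i, u (i+1)) and (v j, v (j+1)) intersect, i.e., u(i+1) > v(j) and u(i) < v(j+1). -/
theorem delta_ne_zero_implies_overlap (u v : ℕ → ℝ)
    (hu : StrictMono u) (hv : StrictMono v) (i j : ℕ)
    (h : |u i - v (j+1)| + |u (i+1) - v j| - |u i - v j| - |u (i+1) - v (j+1)| ≠ 0) :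
    v j < u (i+1) ∧ u i < v (j+1) := by
  have huu : u i < u (i+1) := hu (Nat.lt_succ_self i)
  have hvv : v j < v (j+1) := hv (Nat.lt_succ_self j)
  rcases le_or_gt (u (i+1)) (v j) with h1 | h1
  · exfalso; apply h
    rw [abs_of_nonpos (by linarith), abs_of_nonpos (by linarith),
        abs_of_nonpos (by linarith), abs_of_nonpos (by linarith)]
    ring
  rcases le_or_gt (v (j+1)) (u i) with h2 | h2
  · exfalso; apply h
    rw [abs_of_nonneg (by linarith), abs_of_nonneg (by linarith),
        abs_of_nonneg (by linarith), abs_of_nonneg (by linarith)]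
    ring
  exact ⟨h1, h2⟩
end

section
/- There always exists an optimal solution of the 1D unbalanced optimal transport problem that is monotonic, i.e., for i < j and k < l, x_{il} > 0 implies x_{jk} = 0. -/
lemma abs_quad {a b c d : ℝ} (hab : a ≤ b) (hcd : c ≤ d) :
    |a - c| + |b - d| ≤ |a - d| + |b - c| := by
  rcases abs_cases (a - c) with ⟨h1,_⟩|⟨h1,_⟩ <;>
  rcases abs_cases (b - d) with ⟨h2,_⟩|⟨h2,_⟩ <;>
  rcases abs_cases (a - d) with ⟨h3,_⟩|⟨h3,_⟩ <;>
  rcases abs_cases (b - c) with ⟨h4,_⟩|⟨h4,_⟩ <;>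
  linarith


/-- the uncrossing direction -/
def uotE {n m : ℕ} (i j : Fin n) (k l : Fin m) : Fin n → Fin m → ℝ := fun a b =>
  (if b = k then (if a = i then (1:ℝ) else 0) - (if a = j then 1 else 0) else 0) +
  (if b = l then (if a = j then (1:ℝ) else 0) - (if a = i then 1 else 0) else 0)

section aux

variable {n m : ℕ} (i j : Fin n) (k l : Fin m)

lemma uotE_nonneg' {i j : Fin n} {k l : Fin m} (hij : i ≠ j) (hkl : k ≠ l)
    (x : Fin n → Fin m → ℝ) (δ : ℝ) (hx : ∀ a b, 0 ≤ x a b)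
    (h1 : δ ≤ x i l) (h2 : δ ≤ x j k) (hδ : 0 ≤ δ) (a : Fin n) (b : Fin m) :
    0 ≤ x a b + δ * uotE i j k l a b := by
  have hxab := hx a b
  by_cases hbk : b = k <;> by_cases hbl : b = l <;>
    by_cases hai : a = i <;> by_cases haj : a = j <;>
    simp_all [uotE] <;> nlinarith [hx i k, hx j l, hx a b]

lemma uotE_row (a : Fin n) (hkl : k ≠ l) : ∑ b, uotE i j k l a b = 0 := by
  simp [uotE, Finset.sum_add_distrib, Finset.sum_ite_eq']

lemma uotE_col (b : Fin m) (hij : i ≠ j) (hkl : k ≠ l) : ∑ a, uotE i j k l a b = 0 := by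
  by_cases hbk : b = k <;> by_cases hbl : b = l <;>
    simp [uotE, hbk, hbl, hkl, hkl.symm, Finset.sum_sub_distrib, Finset.sum_ite_eq']

lemma uotE_weighted (c : Fin n → Fin m → ℝ) :
    ∑ a, ∑ b, c a b * uotE i j k l a b = c i k - c j k + (c j l - c i l) := by
  simp [uotE, mul_add, mul_sub, mul_ite, mul_one, mul_zero,
    Finset.sum_add_distrib, Finset.sum_sub_distrib, Finset.sum_ite_eq']

end aux

theorem uot_exists_monotonic_optimal (n m : ℕ)
    (u : Fin n → ℝ) (v : Fin m → ℝ) (hu : StrictMono u) (hv : StrictMono v)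
    (s : Fin n → ℝ) (d : Fin m → ℝ)
    (hs : ∀ i, 0 < s i) (hd : ∀ j, 0 < d j)
    (hbal : ∑ i, s i ≤ ∑ j, d j) :
    let F : Set (Fin n → Fin m → ℝ) :=
      {x | (∀ i j, 0 ≤ x i j) ∧ (∀ i, ∑ j, x i j = s i) ∧ (∀ j, ∑ i, x i j ≤ d j)}
    ∃ x ∈ F,
      (∀ y ∈ F, ∑ i, ∑ j, |u i - v j| * x i j ≤ ∑ i, ∑ j, |u i - v j| * y i j) ∧
      (∀ i j : Fin n, ∀ k l : Fin m, i < j → k < l → 0 < x i l → x j k = 0) := by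
  classical
  intro F
  have hF : ∀ x, x ∈ F ↔
      (∀ i j, 0 ≤ x i j) ∧ (∀ i, ∑ j, x i j = s i) ∧ (∀ j, ∑ i, x i j ≤ d j) :=
    fun x => Iff.rfl
  set c : Fin n → Fin m → ℝ := fun a b => |u a - v b| with hc
  set g : Fin n → Fin m → ℝ := fun a b => (((a:ℕ):ℝ) - ((b:ℕ):ℝ))^2 with hg
  set cost : (Fin n → Fin m → ℝ) → ℝ := fun x => ∑ a, ∑ b, c a b * x a b with hcostdef
  set G : (Fin n → Fin m → ℝ) → ℝ := fun x => ∑ a, ∑ b, g a b * x a b with hGdef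
  -- continuity
  have hcontab : ∀ (a : Fin n) (b : Fin m),
      Continuous fun x : Fin n → Fin m → ℝ => x a b :=
    fun a b => (continuous_apply b).comp (continuous_apply a)
  have hcostcont : Continuous cost :=
    continuous_finset_sum _ fun a _ => continuous_finset_sum _ fun b _ =>
      continuous_const.mul (hcontab a b)
  have hGcont : Continuous G :=
    continuous_finset_sum _ fun a _ => continuous_finset_sum _ fun b _ =>
      continuous_const.mul (hcontab a b)
  -- F nonempty
  have hDnonneg : (0:ℝ) ≤ ∑ j, d j := Finset.sum_nonneg fun j _ => (hd j).le
  have hFne : F.Nonempty := by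
    by_cases hD : (∑ j, d j) = 0
    · have hempty : IsEmpty (Fin n) := by
        by_contra h
        rw [not_isEmpty_iff] at h
        have h1 : 0 < ∑ a, s a := Finset.sum_pos (fun a _ => hs a) Finset.univ_nonempty
        rw [hD] at hbal; linarith
      refine ⟨fun _ _ => 0, (hF _).mpr ⟨fun a b => le_refl 0, fun a => hempty.elim a, fun b => ?_⟩⟩
      simp [(hd b).le]
    · have hD' : 0 < ∑ j, d j := lt_of_le_of_ne hDnonneg (Ne.symm hD)
      refine ⟨fun a b => s a * d b / ∑ j', d j', (hF _).mpr ⟨?_, ?_, ?_⟩⟩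
      · intro a b; exact div_nonneg (mul_nonneg (hs a).le (hd b).le) hDnonneg
      · intro a
        rw [← Finset.sum_div, ← Finset.mul_sum]
        field_simp
      · intro b
        rw [← Finset.sum_div, ← Finset.sum_mul, div_le_iff₀ hD']
        have := mul_le_mul_of_nonneg_right hbal (hd b).le
        linarith
  -- F compact
  have hFclosed : IsClosed F := by
    have heq : F = (⋂ a, ⋂ b, {x : Fin n → Fin m → ℝ | 0 ≤ x a b}) ∩
        ((⋂ a, {x : Fin n → Fin m → ℝ | ∑ b, x a b = s a}) ∩
         (⋂ b, {x : Fin n → Fin m → ℝ | ∑ a, x a b ≤ d b})) := by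
      ext x
      simp only [Set.mem_inter_iff, Set.mem_iInter, Set.mem_setOf_eq, hF]
    rw [heq]
    refine IsClosed.inter ?_ (IsClosed.inter ?_ ?_)
    · exact isClosed_iInter fun a => isClosed_iInter fun b =>
        isClosed_le continuous_const (hcontab a b)
    · exact isClosed_iInter fun a =>
        isClosed_eq (continuous_finset_sum _ fun b _ => hcontab a b) continuous_const
    · exact isClosed_iInter fun b =>
        isClosed_le (continuous_finset_sum _ fun a _ => hcontab a b) continuous_const
  have hsub : F ⊆ Set.pi Set.univ (fun _ : Fin n => Set.pi Set.univ fun b : Fin m => Set.Icc 0 (d b)) := by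
    intro x hx
    obtain ⟨h1, h2, h3⟩ := (hF x).mp hx
    intro a _
    intro b _
    refine ⟨h1 a b, ?_⟩
    calc x a b ≤ ∑ a', x a' b :=
          Finset.single_le_sum (fun a' _ => h1 a' b) (Finset.mem_univ a)
      _ ≤ d b := h3 b
  have hFcpt : IsCompact F :=
    IsCompact.of_isClosed_subset
      (isCompact_univ_pi fun _ => isCompact_univ_pi fun b => isCompact_Icc)
      hFclosed hsub
  -- first optimization
  obtain ⟨x0, hx0F, hx0min⟩ := hFcpt.exists_isMinOn hFne hcostcont.continuousOn
  set S : Set (Fin n → Fin m → ℝ) := F ∩ {x | cost x ≤ cost x0} with hSdef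
  have hSclosed : IsClosed S := hFclosed.inter (isClosed_le hcostcont continuous_const)
  have hScpt : IsCompact S := hFcpt.of_isClosed_subset hSclosed Set.inter_subset_left
  have hSne : S.Nonempty := ⟨x0, hx0F, show cost x0 ≤ cost x0 from le_rfl⟩
  obtain ⟨x, hxS, hxmin⟩ := hScpt.exists_isMinOn hSne hGcont.continuousOn
  obtain ⟨hxF, hxcost⟩ := hxS
  obtain ⟨h1, h2, h3⟩ := (hF x).mp hxF
  refine ⟨x, hxF, ?_, ?_⟩
  · intro y hy
    exact le_trans hxcost (isMinOn_iff.mp hx0min y hy)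
  · intro i j k l hij hkl hxil
    by_contra hxjk0
    have hxjk : 0 < x j k := lt_of_le_of_ne (h1 j k) (Ne.symm hxjk0)
    set δ : ℝ := min (x i l) (x j k) with hδdef
    have hδpos : 0 < δ := lt_min hxil hxjk
    have hij' : i ≠ j := ne_of_lt hij
    have hkl' : k ≠ l := ne_of_lt hkl
    set y : Fin n → Fin m → ℝ := fun a b => x a b + δ * uotE i j k l a b with hydef
    have hlin : ∀ w : Fin n → Fin m → ℝ,
        ∑ a, ∑ b, w a b * y a b
          = ∑ a, ∑ b, w a b * x a b + δ * ∑ a, ∑ b, w a b * uotE i j k l a b := by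
      intro w
      simp only [hydef, mul_add, Finset.sum_add_distrib, Finset.mul_sum]
      ring_nf
      congr 1
      refine Finset.sum_congr rfl fun a _ => Finset.sum_congr rfl fun b _ => by ring
    have hyF : y ∈ F := by
      refine (hF y).mpr ⟨?_, ?_, ?_⟩
      · intro a b
        exact uotE_nonneg' hij' hkl' x δ h1
          (min_le_left _ _) (min_le_right _ _) hδpos.le a b
      · intro a
        simp only [hydef, Finset.sum_add_distrib, ← Finset.mul_sum,
          uotE_row i j k l a hkl', mul_zero, add_zero]
        exact h2 a
      · intro b
        simp only [hydef, Finset.sum_add_distrib, ← Finset.mul_sum,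
          uotE_col i j k l b hij' hkl', mul_zero, add_zero]
        exact h3 b
    have hcosty : cost y ≤ cost x := by
      have hq := abs_quad (hu hij).le (hv hkl).le
      have hw := uotE_weighted i j k l c
      have : cost y = cost x + δ * (c i k - c j k + (c j l - c i l)) := by
        rw [hcostdef]; simp only []; rw [hlin c, hw]
      rw [this]
      have hbr : c i k - c j k + (c j l - c i l) ≤ 0 := by
        simp only [hc]; linarith
      nlinarith
    have hyS : y ∈ S := ⟨hyF, show cost y ≤ cost x0 from le_trans hcosty hxcost⟩
    have hGlt : G y < G x := by
      have hw := uotE_weighted i j k l g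
      have hEq : G y = G x + δ * (g i k - g j k + (g j l - g i l)) := by
        rw [hGdef]; simp only []; rw [hlin g, hw]
      rw [hEq]
      have hij2 : ((i:ℕ):ℝ) < ((j:ℕ):ℝ) := by exact_mod_cast hij
      have hkl2 : ((k:ℕ):ℝ) < ((l:ℕ):ℝ) := by exact_mod_cast hkl
      have hbr : g i k - g j k + (g j l - g i l) < 0 := by
        simp only [hg]; nlinarith
      nlinarith
    exact absurd (isMinOn_iff.mp hxmin y hyS) (not_le.mpr hGlt)
end

section
/- There always exists an optimal solution of the 1D unbalanced optimal transport problem that is monotonic and has no hole, where 'no hole' means: if x_{ik} > 0 and x_{il} > 0 with k < l, then x_{ij} = d_j for all k < j < l. -/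
set_option linter.unnecessarySeqFocus false
open Finset

lemma abs_submod (a b c e : ℝ) (hab : a ≤ b) (hce : c ≤ e) :
    |a - c| + |b - e| ≤ |a - e| + |b - c| := by
  rcases abs_cases (a-c) with ⟨h1,h1'⟩|⟨h1,h1'⟩ <;>
  rcases abs_cases (b-e) with ⟨h2,h2'⟩|⟨h2,h2'⟩ <;>
  rcases abs_cases (a-e) with ⟨h3,h3'⟩|⟨h3,h3'⟩ <;>
  rcases abs_cases (b-c) with ⟨h4,h4'⟩|⟨h4,h4'⟩ <;>
  rw [h1,h2,h3,h4] <;> linarith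

lemma sq_submod (a b c e : ℝ) (hab : a < b) (hce : c < e) :
    (a - c)^2 + (b - e)^2 < (a - e)^2 + (b - c)^2 := by
  nlinarith [mul_pos (sub_pos.2 hab) (sub_pos.2 hce)]

lemma sum_E_row {n m : ℕ} (a p : Fin n) (b : Fin m) :
    ∑ q : Fin m, (if p = a ∧ q = b then (1:ℝ) else 0) = if p = a then 1 else 0 := by
  by_cases h : p = a <;> simp [h]

lemma sum_E_col {n m : ℕ} (a : Fin n) (b q : Fin m) :
    ∑ p : Fin n, (if p = a ∧ q = b then (1:ℝ) else 0) = if q = b then 1 else 0 := by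
  by_cases h : q = b <;> simp [h]

lemma sum_mul_E {n m : ℕ} (g : Fin n → Fin m → ℝ) (a : Fin n) (b : Fin m) :
    ∑ p : Fin n, ∑ q : Fin m, g p q * (if p = a ∧ q = b then (1:ℝ) else 0) = g a b := by
  have h : ∀ p : Fin n, ∑ q : Fin m, g p q * (if p = a ∧ q = b then (1:ℝ) else 0)
      = if p = a then g p b else 0 := by
    intro p; by_cases h : p = a <;> simp [h, mul_ite]
  rw [Finset.sum_congr rfl fun p _ => h p]; simp

lemma exchange_props {n m : ℕ} (x y : Fin n → Fin m → ℝ) (i j : Fin n) (k l : Fin m)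
    (hij : i ≠ j) (hkl : k ≠ l) (δ : ℝ) (hδ0 : 0 ≤ δ) (hδ1 : δ ≤ x i l) (hδ2 : δ ≤ x j k)
    (hx : ∀ p q, 0 ≤ x p q)
    (hy : ∀ p q, y p q = x p q +
      δ * ((if p = i ∧ q = k then 1 else 0) + (if p = j ∧ q = l then 1 else 0)
         - (if p = i ∧ q = l then 1 else 0) - (if p = j ∧ q = k then 1 else 0))) :
    (∀ p q, 0 ≤ y p q) ∧ (∀ p, ∑ q, y p q = ∑ q, x p q) ∧
    (∀ q, ∑ p, y p q = ∑ p, x p q) ∧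
    (∀ g : Fin n → Fin m → ℝ,
      ∑ p, ∑ q, g p q * y p q =
        (∑ p, ∑ q, g p q * x p q) + δ * (g i k + g j l - g i l - g j k)) := by
  refine ⟨?_, ?_, ?_, ?_⟩
  · intro p q
    rw [hy]
    by_cases hp : p = i <;> by_cases hp' : p = j <;>
      by_cases hq : q = k <;> by_cases hq' : q = l <;>
      simp_all <;> linarith [hx p q, hx i l, hx j k, hx i k, hx j l]
  · intro p
    simp only [hy, Finset.sum_add_distrib, Finset.sum_sub_distrib, ← Finset.mul_sum,
      sum_E_row]
    ring
  · intro q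
    simp only [hy, Finset.sum_add_distrib, Finset.sum_sub_distrib, ← Finset.mul_sum,
      sum_E_col]
    ring
  · intro g
    have hpt : ∀ p q, g p q * y p q = g p q * x p q
        + δ * (g p q * (if p = i ∧ q = k then 1 else 0))
        + δ * (g p q * (if p = j ∧ q = l then 1 else 0))
        - δ * (g p q * (if p = i ∧ q = l then 1 else 0))
        - δ * (g p q * (if p = j ∧ q = k then 1 else 0)) := by
      intro p q; rw [hy]; ring
    simp only [hpt, Finset.sum_add_distrib, Finset.sum_sub_distrib, ← Finset.mul_sum,
      sum_mul_E]
    ring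

lemma shift_props {n m : ℕ} (x y : Fin n → Fin m → ℝ) (i : Fin n) (a b : Fin m)
    (hab : a ≠ b) (δ : ℝ) (hδ0 : 0 ≤ δ) (hδ1 : δ ≤ x i b) (hx : ∀ p q, 0 ≤ x p q)
    (hy : ∀ p q, y p q = x p q +
      δ * ((if p = i ∧ q = a then 1 else 0) - (if p = i ∧ q = b then 1 else 0))) :
    (∀ p q, 0 ≤ y p q) ∧ (∀ p, ∑ q, y p q = ∑ q, x p q) ∧
    (∀ q, ∑ p, y p q = (∑ p, x p q) +
      δ * ((if q = a then 1 else 0) - (if q = b then 1 else 0))) ∧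
    (∀ g : Fin n → Fin m → ℝ,
      ∑ p, ∑ q, g p q * y p q = (∑ p, ∑ q, g p q * x p q) + δ * (g i a - g i b)) := by
  refine ⟨?_, ?_, ?_, ?_⟩
  · intro p q
    rw [hy]
    by_cases hp : p = i <;> by_cases hq : q = a <;> by_cases hq' : q = b <;>
      simp_all <;> linarith [hx p q, hx i b, hx i a]
  · intro p
    simp only [hy, Finset.sum_add_distrib, Finset.sum_sub_distrib, ← Finset.mul_sum,
      sum_E_row]
    ring
  · intro q
    simp only [hy, Finset.sum_add_distrib, Finset.sum_sub_distrib, ← Finset.mul_sum,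
      sum_E_col]
  · intro g
    have hpt : ∀ p q, g p q * y p q = g p q * x p q
        + δ * (g p q * (if p = i ∧ q = a then 1 else 0))
        - δ * (g p q * (if p = i ∧ q = b then 1 else 0)) := by
      intro p q; rw [hy]; ring
    simp only [hpt, Finset.sum_add_distrib, Finset.sum_sub_distrib, ← Finset.mul_sum,
      sum_mul_E]
    ring

theorem uot_exists_monotonic_nohole_optimal (n m : ℕ)
    (u : Fin n → ℝ) (v : Fin m → ℝ) (hu : StrictMono u) (hv : StrictMono v)
    (s : Fin n → ℝ) (d : Fin m → ℝ)
    (hs : ∀ i, 0 < s i) (hd : ∀ j, 0 < d j)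
    (hbal : ∑ i, s i ≤ ∑ j, d j) :
    let F : Set (Fin n → Fin m → ℝ) :=
      {x | (∀ i j, 0 ≤ x i j) ∧ (∀ i, ∑ j, x i j = s i) ∧ (∀ j, ∑ i, x i j ≤ d j)}
    ∃ x ∈ F,
      (∀ y ∈ F, ∑ i, ∑ j, |u i - v j| * x i j ≤ ∑ i, ∑ j, |u i - v j| * y i j) ∧
      (∀ i j : Fin n, ∀ k l : Fin m, i < j → k < l → 0 < x i l → x j k = 0) ∧
      (∀ i : Fin n, ∀ k l : Fin m, k < l → 0 < x i k → 0 < x i l →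
        ∀ j : Fin m, k < j → j < l → x i j = d j) := by
  intro F
  set C : (Fin n → Fin m → ℝ) → ℝ := fun x => ∑ i, ∑ j, |u i - v j| * x i j with hCdef
  set Φ : (Fin n → Fin m → ℝ) → ℝ := fun x => ∑ i, ∑ j, (u i - v j)^2 * x i j with hΦdef
  have hCcont : Continuous C :=
    continuous_finset_sum _ fun i _ => continuous_finset_sum _ fun j _ =>
      continuous_const.mul ((continuous_apply j).comp (continuous_apply i))
  have hΦcont : Continuous Φ :=
    continuous_finset_sum _ fun i _ => continuous_finset_sum _ fun j _ =>
      continuous_const.mul ((continuous_apply j).comp (continuous_apply i))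
  have hFne : F.Nonempty := by
    rcases isEmpty_or_nonempty (Fin n) with hn | hn
    · refine ⟨fun _ _ => 0, fun i j => le_refl 0, fun i => hn.elim i, fun j => ?_⟩
      simp [(hd j).le]
    · have hspos : 0 < ∑ i, s i :=
        Finset.sum_pos (fun i _ => hs i) ⟨hn.some, Finset.mem_univ _⟩
      have hT : 0 < ∑ j, d j := lt_of_lt_of_le hspos hbal
      refine ⟨fun i j => s i * d j / (∑ j, d j),
        fun i j => div_nonneg (mul_nonneg (hs i).le (hd j).le) hT.le, fun i => ?_, fun j => ?_⟩
      · rw [← Finset.sum_div, ← Finset.mul_sum]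
        field_simp
      · rw [← Finset.sum_div, ← Finset.sum_mul, div_le_iff₀ hT]
        calc (∑ i, s i) * d j ≤ (∑ j, d j) * d j :=
              mul_le_mul_of_nonneg_right hbal (hd j).le
          _ = d j * (∑ j, d j) := by ring
  have hclosed : IsClosed F := by
    have h1 : IsClosed {x : Fin n → Fin m → ℝ | ∀ i j, 0 ≤ x i j} := by
      have : {x : Fin n → Fin m → ℝ | ∀ i j, 0 ≤ x i j} = ⋂ i, ⋂ j, {x | 0 ≤ x i j} := by
        ext; simp
      rw [this]
      exact isClosed_iInter fun i => isClosed_iInter fun j =>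
        isClosed_le continuous_const ((continuous_apply j).comp (continuous_apply i))
    have h2 : IsClosed {x : Fin n → Fin m → ℝ | ∀ i, ∑ j, x i j = s i} := by
      have : {x : Fin n → Fin m → ℝ | ∀ i, ∑ j, x i j = s i} = ⋂ i, {x | ∑ j, x i j = s i} := by
        ext; simp
      rw [this]
      exact isClosed_iInter fun i => isClosed_eq
        (continuous_finset_sum _ fun j _ => (continuous_apply j).comp (continuous_apply i))
        continuous_const
    have h3 : IsClosed {x : Fin n → Fin m → ℝ | ∀ j, ∑ i, x i j ≤ d j} := by
      have : {x : Fin n → Fin m → ℝ | ∀ j, ∑ i, x i j ≤ d j} = ⋂ j, {x | ∑ i, x i j ≤ d j} := by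
        ext; simp
      rw [this]
      exact isClosed_iInter fun j => isClosed_le
        (continuous_finset_sum _ fun i _ => (continuous_apply j).comp (continuous_apply i))
        continuous_const
    have hF : F = {x : Fin n → Fin m → ℝ | ∀ i j, 0 ≤ x i j} ∩
        ({x | ∀ i, ∑ j, x i j = s i} ∩ {x | ∀ j, ∑ i, x i j ≤ d j}) := by
      ext x; simp only [F, Set.mem_setOf_eq, Set.mem_inter_iff]
    rw [hF]; exact h1.inter (h2.inter h3)
  have hFc : IsCompact F := by
    have hK : IsCompact (Set.pi Set.univ fun i : Fin n =>
        Set.pi Set.univ fun _ : Fin m => Set.Icc (0:ℝ) (s i)) :=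
      isCompact_univ_pi fun i => isCompact_univ_pi fun _ => isCompact_Icc
    refine hK.of_isClosed_subset hclosed ?_
    intro x hx
    rw [Set.mem_univ_pi]
    intro i
    rw [Set.mem_univ_pi]
    intro j
    refine ⟨hx.1 i j, ?_⟩
    calc x i j ≤ ∑ q, x i q :=
          Finset.single_le_sum (fun q _ => hx.1 i q) (Finset.mem_univ j)
      _ = s i := hx.2.1 i
  obtain ⟨x0, hx0F, hx0min⟩ := hFc.exists_isMinOn hFne hCcont.continuousOn
  have hF'c : IsCompact (F ∩ {z | C z = C x0}) :=
    hFc.inter_right (isClosed_eq hCcont continuous_const)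
  obtain ⟨x, hxF', hxmin⟩ := hF'c.exists_isMinOn ⟨x0, hx0F, rfl⟩ hΦcont.continuousOn
  obtain ⟨hxF, hxC⟩ := hxF'
  have hCmin : ∀ y ∈ F, C x ≤ C y := by
    intro y hy
    rw [hxC]
    exact hx0min hy
  -- monotonicity
  have hmono : ∀ i j : Fin n, ∀ k l : Fin m, i < j → k < l → 0 < x i l → x j k = 0 := by
    intro i j k l hij hkl hil
    by_contra hne
    have hjk : 0 < x j k := lt_of_le_of_ne (hxF.1 j k) (Ne.symm hne)
    set δ := min (x i l) (x j k) with hδdef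
    have hδpos : 0 < δ := lt_min hil hjk
    set y : Fin n → Fin m → ℝ := fun p q => x p q +
      δ * ((if p = i ∧ q = k then 1 else 0) + (if p = j ∧ q = l then 1 else 0)
         - (if p = i ∧ q = l then 1 else 0) - (if p = j ∧ q = k then 1 else 0)) with hydef
    obtain ⟨hy0, hyrow, hycol, hysum⟩ := exchange_props x y i j k l hij.ne hkl.ne δ
      hδpos.le (min_le_left _ _) (min_le_right _ _) hxF.1 (fun p q => rfl)
    have hyF : y ∈ F := by
      refine ⟨hy0, fun p => ?_, fun q => ?_⟩
      · rw [hyrow p]; exact hxF.2.1 p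
      · rw [hycol q]; exact hxF.2.2 q
    have hCy : C y = C x + δ * (|u i - v k| + |u j - v l| - |u i - v l| - |u j - v k|) :=
      hysum (fun p q => |u p - v q|)
    have hΔ : |u i - v k| + |u j - v l| - |u i - v l| - |u j - v k| ≤ 0 := by
      have := abs_submod (u i) (u j) (v k) (v l) (hu hij).le (hv hkl).le
      linarith
    have hCyle : C y ≤ C x := by
      nlinarith [mul_nonneg hδpos.le (neg_nonneg.mpr hΔ)]
    have hCyeq : C y = C x := le_antisymm hCyle (hCmin y hyF)
    have hyF' : y ∈ F ∩ {z | C z = C x0} := ⟨hyF, by show C y = C x0; rw [hCyeq]; exact hxC⟩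
    have hΦy : Φ y = Φ x + δ * ((u i - v k)^2 + (u j - v l)^2 - (u i - v l)^2 - (u j - v k)^2) :=
      hysum (fun p q => (u p - v q)^2)
    have hΔ2 : (u i - v k)^2 + (u j - v l)^2 - (u i - v l)^2 - (u j - v k)^2 < 0 := by
      have := sq_submod (u i) (u j) (v k) (v l) (hu hij) (hv hkl)
      linarith
    have : Φ y < Φ x := by nlinarith [mul_pos hδpos (neg_pos.mpr hΔ2)]
    have := hxmin hyF'
    simp only [Set.mem_setOf_eq] at this
    linarith [this]
  refine ⟨x, hxF, fun y hy => hCmin y hy, hmono, ?_⟩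
  -- no hole
  intro i k l hkl hik hil j hkj hjl
  have hcolj : ∑ p, x p j = x i j := by
    refine Finset.sum_eq_single i (fun p _ hpi => ?_) (fun h => absurd (Finset.mem_univ i) h)
    rcases lt_or_gt_of_ne hpi with hp | hp
    · by_contra hne
      have hpj : 0 < x p j := lt_of_le_of_ne (hxF.1 p j) (Ne.symm hne)
      exact hik.ne' (hmono p i k j hp hkj hpj)
    · exact hmono i p j l hp hjl hil
  have hle : x i j ≤ d j := by rw [← hcolj]; exact hxF.2.2 j
  by_contra hne
  have hlt : x i j < d j := lt_of_le_of_ne hle hne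
  rcases le_total (u i) (v j) with hc | hc
  · -- move from (i,l) to (i,j)
    set δ := min (x i l) (d j - x i j) with hδdef
    have hδpos : 0 < δ := lt_min hil (by linarith)
    set y : Fin n → Fin m → ℝ := fun p q => x p q +
      δ * ((if p = i ∧ q = j then 1 else 0) - (if p = i ∧ q = l then 1 else 0)) with hydef
    obtain ⟨hy0, hyrow, hycol, hysum⟩ := shift_props x y i j l hjl.ne δ
      hδpos.le (min_le_left _ _) hxF.1 (fun p q => rfl)
    have hyF : y ∈ F := by
      refine ⟨hy0, fun p => ?_, fun q => ?_⟩
      · rw [hyrow p]; exact hxF.2.1 p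
      · rw [hycol q]
        by_cases hq : q = j
        · rw [hq, if_pos rfl, if_neg hjl.ne, hcolj]
          have h2 : δ ≤ d j - x i j := min_le_right _ _
          linarith
        · by_cases hq' : q = l
          · subst hq'
            simp [hq]
            linarith [hxF.2.2 q, hδpos.le]
          · simp [hq, hq']
            exact hxF.2.2 q
    have hCy : C y = C x + δ * (|u i - v j| - |u i - v l|) := hysum (fun p q => |u p - v q|)
    have habs : |u i - v j| ≤ |u i - v l| := by
      rw [abs_of_nonpos (by linarith), abs_of_nonpos (by linarith [hv hjl])]
      linarith [hv hjl]
    have hCyle : C y ≤ C x := by nlinarith [mul_nonneg hδpos.le (sub_nonneg.mpr habs)]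
    have hCyeq : C y = C x := le_antisymm hCyle (hCmin y hyF)
    have hyF' : y ∈ F ∩ {z | C z = C x0} := ⟨hyF, by show C y = C x0; rw [hCyeq]; exact hxC⟩
    have hΦy : Φ y = Φ x + δ * ((u i - v j)^2 - (u i - v l)^2) := hysum (fun p q => (u p - v q)^2)
    have hsq : (u i - v j)^2 < (u i - v l)^2 := by nlinarith [hv hjl]
    have : Φ y < Φ x := by nlinarith [mul_pos hδpos (sub_pos.mpr hsq)]
    have := hxmin hyF'
    simp only [Set.mem_setOf_eq] at this
    linarith [this]
  · -- move from (i,k) to (i,j)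
    set δ := min (x i k) (d j - x i j) with hδdef
    have hδpos : 0 < δ := lt_min hik (by linarith)
    set y : Fin n → Fin m → ℝ := fun p q => x p q +
      δ * ((if p = i ∧ q = j then 1 else 0) - (if p = i ∧ q = k then 1 else 0)) with hydef
    obtain ⟨hy0, hyrow, hycol, hysum⟩ := shift_props x y i j k hkj.ne' δ
      hδpos.le (min_le_left _ _) hxF.1 (fun p q => rfl)
    have hyF : y ∈ F := by
      refine ⟨hy0, fun p => ?_, fun q => ?_⟩
      · rw [hyrow p]; exact hxF.2.1 p
      · rw [hycol q]
        by_cases hq : q = j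
        · rw [hq, if_pos rfl, if_neg hkj.ne', hcolj]
          have h2 : δ ≤ d j - x i j := min_le_right _ _
          linarith
        · by_cases hq' : q = k
          · subst hq'
            simp [hq]
            linarith [hxF.2.2 q, hδpos.le]
          · simp [hq, hq']
            exact hxF.2.2 q
    have hCy : C y = C x + δ * (|u i - v j| - |u i - v k|) := hysum (fun p q => |u p - v q|)
    have habs : |u i - v j| ≤ |u i - v k| := by
      rw [abs_of_nonneg (by linarith), abs_of_nonneg (by linarith [hv hkj])]
      linarith [hv hkj]
    have hCyle : C y ≤ C x := by nlinarith [mul_nonneg hδpos.le (sub_nonneg.mpr habs)]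
    have hCyeq : C y = C x := le_antisymm hCyle (hCmin y hyF)
    have hyF' : y ∈ F ∩ {z | C z = C x0} := ⟨hyF, by show C y = C x0; rw [hCyeq]; exact hxC⟩
    have hΦy : Φ y = Φ x + δ * ((u i - v j)^2 - (u i - v k)^2) := hysum (fun p q => (u p - v q)^2)
    have hsq : (u i - v j)^2 < (u i - v k)^2 := by nlinarith [hv hkj]
    have : Φ y < Φ x := by nlinarith [mul_pos hδpos (sub_pos.mpr hsq)]
    have := hxmin hyF'
    simp only [Set.mem_setOf_eq] at this
    linarith [this]
end

section
/- In a monotonic solution with no hole of a balanced 1D transportation problem, each source i with supply s_i sends flow only to sinks j satisfying D_{j−1} < S_i and D_j > S_{i−1}, where S_i = ∑_{k ≤ i} s_k and D_j = ∑_{l ≤ j} d_l; and conversely in the balanced case (S_n = D_m) the flow x_{ij} = max(0, min(S_i, D_j) − max(S_{i−1}, D_{j−1})) is the unique monotonic solution with no hole. -/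
open Finset

private lemma min_identity (a b c e : ℝ) (hca : c ≤ a) (heb : e ≤ b) :
    min a b - min c b - min a e + min c e = max 0 (min a b - max c e) := by
  rcases le_total a b with h1|h1 <;> rcases le_total c b with h2|h2 <;>
    rcases le_total a e with h3|h3 <;> rcases le_total c e with h4|h4 <;>
    simp [min_def, max_def] <;> split_ifs <;> linarith

open Finset in
theorem balanced_monotonic_nohole_characterization (n m : ℕ)
    (s d : ℕ → ℝ) (x : ℕ → ℕ → ℝ)
    (hs : ∀ i ∈ Icc 1 n, 0 < s i) (hd : ∀ j ∈ Icc 1 m, 0 < d j)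
    (S D : ℕ → ℝ)
    (hS : ∀ i, S i = ∑ k ∈ Icc 1 i, s k) (hD : ∀ j, D j = ∑ l ∈ Icc 1 j, d l)
    (hbal : S n = D m)
    (hpos : ∀ i ∈ Icc 1 n, ∀ j ∈ Icc 1 m, 0 ≤ x i j)
    (hrow : ∀ i ∈ Icc 1 n, ∑ j ∈ Icc 1 m, x i j = s i)
    (hcol : ∀ j ∈ Icc 1 m, ∑ i ∈ Icc 1 n, x i j = d j)
    (hmono : ∀ i ∈ Icc 1 n, ∀ j ∈ Icc 1 n, ∀ k ∈ Icc 1 m, ∀ l ∈ Icc 1 m,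
      i < j → k < l → 0 < x i l → x j k = 0)
    (hnohole : ∀ i ∈ Icc 1 n, ∀ k ∈ Icc 1 m, ∀ l ∈ Icc 1 m, k < l →
      0 < x i k → 0 < x i l → ∀ j, k < j → j < l → x i j = d j) :
    (∀ i ∈ Icc 1 n, ∀ j ∈ Icc 1 m, 0 < x i j → D (j-1) < S i ∧ S (i-1) < D j) ∧
    (∀ i ∈ Icc 1 n, ∀ j ∈ Icc 1 m,
      x i j = max 0 (min (S i) (D j) - max (S (i-1)) (D (j-1)))) := by
  set T : ℕ → ℕ → ℝ := fun i j => ∑ i' ∈ Icc 1 i, ∑ j' ∈ Icc 1 j, x i' j' with hTdef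
  -- splitting lemma for Icc 1
  have hsplit : ∀ (f : ℕ → ℝ) (a b : ℕ), a ≤ b →
      ∑ k ∈ Icc 1 b, f k = ∑ k ∈ Icc 1 a, f k + ∑ k ∈ Ioc a b, f k := by
    intro f a b hab
    have h1 : Icc 1 b = Ioc 0 b := by ext k; simp; omega
    have h2 : Icc 1 a = Ioc 0 a := by ext k; simp; omega
    rw [h1, h2]
    exact (Finset.sum_Ioc_consecutive f (Nat.zero_le a) hab).symm
  have hTrow : ∀ i ≤ n, T i m = S i := by
    intro i hi
    rw [hS]; simp only [hTdef]
    exact Finset.sum_congr rfl fun i' hi' =>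
      hrow i' (Finset.mem_Icc.mpr ⟨(Finset.mem_Icc.mp hi').1, le_trans (Finset.mem_Icc.mp hi').2 hi⟩)
  have hTcol : ∀ j ≤ m, T n j = D j := by
    intro j hj
    rw [hD]; simp only [hTdef]; rw [Finset.sum_comm]
    exact Finset.sum_congr rfl fun j' hj' =>
      hcol j' (Finset.mem_Icc.mpr ⟨(Finset.mem_Icc.mp hj').1, le_trans (Finset.mem_Icc.mp hj').2 hj⟩)
  have hxnn : ∀ i' ∈ Icc 1 n, ∀ j' ∈ Icc 1 m, 0 ≤ x i' j' := hpos
  -- Main lemma : T i j = min (S i) (D j)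
  have hT : ∀ i ≤ n, ∀ j ≤ m, T i j = min (S i) (D j) := by
    intro i hi j hj
    have hub1 : T i j ≤ S i := by
      rw [← hTrow i hi]; simp only [hTdef]
      apply Finset.sum_le_sum
      intro i' hi'
      have hi'n : i' ∈ Icc 1 n := Finset.mem_Icc.mpr
        ⟨(Finset.mem_Icc.mp hi').1, le_trans (Finset.mem_Icc.mp hi').2 hi⟩
      apply Finset.sum_le_sum_of_subset_of_nonneg (Finset.Icc_subset_Icc_right hj)
      intro k hk _
      exact hxnn i' hi'n k hk
    have hub2 : T i j ≤ D j := by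
      rw [← hTcol j hj]; simp only [hTdef]
      apply Finset.sum_le_sum_of_subset_of_nonneg (Finset.Icc_subset_Icc_right hi)
      intro i' hi' _
      exact Finset.sum_nonneg fun k hk =>
        hxnn i' hi' k (Finset.mem_Icc.mpr ⟨(Finset.mem_Icc.mp hk).1, le_trans (Finset.mem_Icc.mp hk).2 hj⟩)
    refine le_antisymm (le_min hub1 hub2) ?_
    by_cases hcase : ∀ i' ∈ Icc 1 i, ∀ l ∈ Ioc j m, x i' l = 0
    · -- all mass of first i rows is in first j columns
      have : T i m = T i j := by
        simp only [hTdef]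
        rw [Finset.sum_congr rfl (fun i' hi' => hsplit (x i') j m hj)]
        rw [Finset.sum_add_distrib]
        have hz : ∑ i' ∈ Icc 1 i, ∑ l ∈ Ioc j m, x i' l = 0 := by
          apply Finset.sum_eq_zero
          intro i' hi'
          exact Finset.sum_eq_zero fun l hl => hcase i' hi' l hl
        rw [hz, add_zero]
      rw [← this, hTrow i hi]
      exact min_le_left _ _
    · -- some mass of first i rows is beyond column j; then columns ≤ j get nothing below row i
      push_neg at hcase
      obtain ⟨i', hi', l, hl, hne⟩ := hcase
      have hi'mem : i' ∈ Icc 1 n := Finset.mem_Icc.mpr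
        ⟨(Finset.mem_Icc.mp hi').1, le_trans (Finset.mem_Icc.mp hi').2 hi⟩
      have hlmem : l ∈ Icc 1 m := Finset.mem_Icc.mpr
        ⟨Nat.one_le_iff_ne_zero.mpr (by have := (Finset.mem_Ioc.mp hl).1; omega), (Finset.mem_Ioc.mp hl).2⟩
      have hxpos : 0 < x i' l := lt_of_le_of_ne (hxnn i' hi'mem l hlmem) (Ne.symm hne)
      have hzero : ∀ i'' ∈ Ioc i n, ∀ k ∈ Icc 1 j, x i'' k = 0 := by
        intro i'' hi'' k hk
        have hi''mem : i'' ∈ Icc 1 n := Finset.mem_Icc.mpr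
          ⟨by have := (Finset.mem_Ioc.mp hi'').1; omega, (Finset.mem_Ioc.mp hi'').2⟩
        have hkmem : k ∈ Icc 1 m := Finset.mem_Icc.mpr
          ⟨(Finset.mem_Icc.mp hk).1, le_trans (Finset.mem_Icc.mp hk).2 hj⟩
        exact hmono i' hi'mem i'' hi''mem k hkmem l hlmem
          (lt_of_le_of_lt (Finset.mem_Icc.mp hi').2 (Finset.mem_Ioc.mp hi'').1)
          (lt_of_le_of_lt (Finset.mem_Icc.mp hk).2 (Finset.mem_Ioc.mp hl).1) hxpos
      have : T n j = T i j := by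
        simp only [hTdef]
        rw [hsplit (fun i' => ∑ j' ∈ Icc 1 j, x i' j') i n hi]
        have hz : ∑ i'' ∈ Ioc i n, ∑ k ∈ Icc 1 j, x i'' k = 0 :=
          Finset.sum_eq_zero fun i'' hi'' => Finset.sum_eq_zero fun k hk => hzero i'' hi'' k hk
        rw [hz, add_zero]
      rw [← this, hTcol j hj]
      exact min_le_right _ _
  -- partial sums are monotone
  have hSstep : ∀ a, a + 1 ≤ n → S a ≤ S (a + 1) := by
    intro a ha
    rw [hS (a+1), hS a, Finset.sum_Icc_succ_top (Nat.le_add_left 1 a)]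
    have := hs (a+1) (Finset.mem_Icc.mpr ⟨Nat.le_add_left 1 a, ha⟩)
    linarith
  have hDstep : ∀ b, b + 1 ≤ m → D b ≤ D (b + 1) := by
    intro b hb
    rw [hD (b+1), hD b, Finset.sum_Icc_succ_top (Nat.le_add_left 1 b)]
    have := hd (b+1) (Finset.mem_Icc.mpr ⟨Nat.le_add_left 1 b, hb⟩)
    linarith
  -- the explicit formula
  have hform : ∀ i ∈ Icc 1 n, ∀ j ∈ Icc 1 m,
      x i j = max 0 (min (S i) (D j) - max (S (i-1)) (D (j-1))) := by
    intro i hi j hj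
    obtain ⟨hi1, hin⟩ := Finset.mem_Icc.mp hi
    obtain ⟨hj1, hjm⟩ := Finset.mem_Icc.mp hj
    obtain ⟨a, rfl⟩ : ∃ a, i = a + 1 := ⟨i - 1, by omega⟩
    obtain ⟨b, rfl⟩ : ∃ b, j = b + 1 := ⟨j - 1, by omega⟩
    simp only [Nat.add_sub_cancel]
    have hxT : x (a+1) (b+1) = T (a+1) (b+1) - T a (b+1) - T (a+1) b + T a b := by
      simp only [hTdef]
      rw [Finset.sum_Icc_succ_top (Nat.le_add_left 1 a) (fun i' => ∑ j' ∈ Icc 1 (b+1), x i' j'),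
        Finset.sum_Icc_succ_top (Nat.le_add_left 1 a) (fun i' => ∑ j' ∈ Icc 1 b, x i' j'),
        Finset.sum_Icc_succ_top (Nat.le_add_left 1 b) (x (a+1))]
      ring
    rw [hxT, hT (a+1) hin (b+1) hjm, hT a (le_trans (Nat.le_succ a) hin) (b+1) hjm,
      hT (a+1) hin b (le_trans (Nat.le_succ b) hjm),
      hT a (le_trans (Nat.le_succ a) hin) b (le_trans (Nat.le_succ b) hjm)]
    exact min_identity _ _ _ _ (hSstep a hin) (hDstep b hjm)
  refine ⟨?_, hform⟩
  intro i hi j hj hx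
  rw [hform i hi j hj] at hx
  have ht : 0 < min (S i) (D j) - max (S (i-1)) (D (j-1)) := by
    by_contra h
    push_neg at h
    rw [max_eq_left h] at hx
    exact lt_irrefl 0 hx
  constructor
  · have h1 := min_le_left (S i) (D j)
    have h2 := le_max_right (S (i-1)) (D (j-1))
    linarith
  · have h1 := min_le_right (S i) (D j)
    have h2 := le_max_left (S (i-1)) (D (j-1))
    linarith
end

section
/- For a balanced 1D transportation problem, the matrix defined by x_{ij} = max(0, min(S_i, D_j) − max(S_{i−1}, D_{j−1})) is a feasible solution: all entries are nonnegative, each row i sums to s_i, and each column j sums to d_j. -/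
lemma nw_tel (g : ℕ → ℝ) (m : ℕ) :
    ∑ j ∈ Finset.Icc 1 m, (g j - g (j-1)) = g m - g 0 := by
  induction m with
  | zero => simp
  | succ k ih =>
    rw [Finset.sum_Icc_succ_top (by omega : 1 ≤ k + 1), ih]
    simp

lemma nw_med (a A b B : ℝ) (hA : a ≤ A) (hB : b ≤ B) :
    max 0 (min A B - max a b) = min A (max a B) - min A (max a b) := by
  rcases le_total A B with h1 | h1 <;> rcases le_total a b with h2 | h2 <;>
    rcases le_total A b with h3 | h3 <;> rcases le_total a B with h4 | h4 <;>
      simp [max_def, min_def] <;> split_ifs <;> linarith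

open Finset in
theorem northwest_corner_feasible (n m : ℕ)
    (s d : ℕ → ℝ)
    (hs : ∀ i ∈ Icc 1 n, 0 < s i) (hd : ∀ j ∈ Icc 1 m, 0 < d j)
    (S D : ℕ → ℝ)
    (hS : ∀ i, S i = ∑ k ∈ Icc 1 i, s k) (hD : ∀ j, D j = ∑ l ∈ Icc 1 j, d l)
    (hbal : S n = D m)
    (x : ℕ → ℕ → ℝ)
    (hx : ∀ i j, x i j = max 0 (min (S i) (D j) - max (S (i-1)) (D (j-1)))) :
    (∀ i j, 0 ≤ x i j) ∧
    (∀ i ∈ Icc 1 n, ∑ j ∈ Icc 1 m, x i j = s i) ∧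
    (∀ j ∈ Icc 1 m, ∑ i ∈ Icc 1 n, x i j = d j) := by
  have Sle : ∀ i₁ i₂, i₁ ≤ i₂ → i₂ ≤ n → S i₁ ≤ S i₂ := by
    intro i₁ i₂ h hn
    rw [hS, hS]
    apply Finset.sum_le_sum_of_subset_of_nonneg (Finset.Icc_subset_Icc_right h)
    intro k hk _
    exact (hs k (Finset.mem_Icc.mpr ⟨(Finset.mem_Icc.mp hk).1, le_trans (Finset.mem_Icc.mp hk).2 hn⟩)).le
  have Dle : ∀ j₁ j₂, j₁ ≤ j₂ → j₂ ≤ m → D j₁ ≤ D j₂ := by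
    intro j₁ j₂ h hm
    rw [hD, hD]
    apply Finset.sum_le_sum_of_subset_of_nonneg (Finset.Icc_subset_Icc_right h)
    intro k hk _
    exact (hd k (Finset.mem_Icc.mpr ⟨(Finset.mem_Icc.mp hk).1, le_trans (Finset.mem_Icc.mp hk).2 hm⟩)).le
  have S0 : S 0 = 0 := by rw [hS]; simp
  have D0 : D 0 = 0 := by rw [hD]; simp
  have Ssucc : ∀ i, 1 ≤ i → S i = S (i-1) + s i := by
    intro i hi
    obtain ⟨k, rfl⟩ : ∃ k, i = k + 1 := ⟨i - 1, by omega⟩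
    rw [hS, hS, Finset.sum_Icc_succ_top (by omega : 1 ≤ k + 1)]
    simp
  have Dsucc : ∀ j, 1 ≤ j → D j = D (j-1) + d j := by
    intro j hj
    obtain ⟨k, rfl⟩ : ∃ k, j = k + 1 := ⟨j - 1, by omega⟩
    rw [hD, hD, Finset.sum_Icc_succ_top (by omega : 1 ≤ k + 1)]
    simp
  refine ⟨fun i j => by rw [hx]; exact le_max_left _ _, ?_, ?_⟩
  · intro i hi
    rw [Finset.mem_Icc] at hi
    have ha : S (i-1) ≤ S i := Sle _ _ (by omega) hi.2
    have h0a : 0 ≤ S (i-1) := S0 ▸ Sle 0 (i-1) (by omega) (by omega)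
    have hAn : S i ≤ S n := Sle i n hi.2 le_rfl
    calc ∑ j ∈ Icc 1 m, x i j
        = ∑ j ∈ Icc 1 m, (min (S i) (max (S (i-1)) (D j))
            - min (S i) (max (S (i-1)) (D (j-1)))) := by
          apply Finset.sum_congr rfl
          intro j hj
          rw [Finset.mem_Icc] at hj
          rw [hx]
          exact nw_med _ _ _ _ ha (Dle (j-1) j (by omega) hj.2)
      _ = min (S i) (max (S (i-1)) (D m)) - min (S i) (max (S (i-1)) (D 0)) :=
          nw_tel (fun j => min (S i) (max (S (i-1)) (D j))) m
      _ = s i := by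
          rw [D0, max_eq_left h0a, min_eq_right ha,
            min_eq_left (le_trans (hbal ▸ hAn) (le_max_right _ _))]
          have := Ssucc i hi.1
          linarith
  · intro j hj
    rw [Finset.mem_Icc] at hj
    have hb : D (j-1) ≤ D j := Dle _ _ (by omega) hj.2
    have h0b : 0 ≤ D (j-1) := D0 ▸ Dle 0 (j-1) (by omega) (by omega)
    have hBm : D j ≤ D m := Dle j m hj.2 le_rfl
    calc ∑ i ∈ Icc 1 n, x i j
        = ∑ i ∈ Icc 1 n, (min (D j) (max (D (j-1)) (S i))
            - min (D j) (max (D (j-1)) (S (i-1)))) := by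
          apply Finset.sum_congr rfl
          intro i hi
          rw [Finset.mem_Icc] at hi
          rw [hx]
          rw [min_comm (S i) (D j), max_comm (S (i-1)) (D (j-1))]
          exact nw_med _ _ _ _ hb (Sle (i-1) i (by omega) hi.2)
      _ = min (D j) (max (D (j-1)) (S n)) - min (D j) (max (D (j-1)) (S 0)) :=
          nw_tel (fun i => min (D j) (max (D (j-1)) (S i))) n
      _ = d j := by
          rw [S0, max_eq_left h0b, min_eq_right hb,
            min_eq_left (le_trans (hbal ▸ hBm) (le_max_right _ _))]
          have := Dsucc j hj.1
          linarith
end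

section
/- The north-west corner solution x_{ij} = max(0, min(S_i, D_j) − max(S_{i−1}, D_{j−1})) of a balanced 1D transportation problem is monotonic: for i < k and l < j, x_{ij} > 0 implies x_{kl} = 0. -/
open Finset in
theorem northwest_corner_monotonic (n m : ℕ)
    (s d : ℕ → ℝ)
    (hs : ∀ i ∈ Icc 1 n, 0 < s i) (hd : ∀ j ∈ Icc 1 m, 0 < d j)
    (S D : ℕ → ℝ)
    (hS : ∀ i, S i = ∑ k ∈ Icc 1 i, s k) (hD : ∀ j, D j = ∑ l ∈ Icc 1 j, d l)
    (hbal : S n = D m)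
    (x : ℕ → ℕ → ℝ)
    (hx : ∀ i j, x i j = max 0 (min (S i) (D j) - max (S (i-1)) (D (j-1)))) :
    ∀ i ∈ Icc 1 n, ∀ k ∈ Icc 1 n, ∀ j ∈ Icc 1 m, ∀ l ∈ Icc 1 m,
      i < k → l < j → 0 < x i j → x k l = 0 := by
  intro i hi k hk j hj l hl hik hlj hpos
  simp only [mem_Icc] at hi hk hj hl
  -- monotonicity of S on [0,n]
  have hSmono : ∀ a b : ℕ, a ≤ b → b ≤ n → S a ≤ S b := by
    intro a b hab hbn
    rw [hS, hS]
    apply Finset.sum_le_sum_of_subset_of_nonneg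
    · exact Finset.Icc_subset_Icc_right hab
    · intro t ht _
      simp only [mem_Icc] at ht
      exact (hs t (mem_Icc.mpr ⟨ht.1, le_trans ht.2 hbn⟩)).le
  have hDmono : ∀ a b : ℕ, a ≤ b → b ≤ m → D a ≤ D b := by
    intro a b hab hbm
    rw [hD, hD]
    apply Finset.sum_le_sum_of_subset_of_nonneg
    · exact Finset.Icc_subset_Icc_right hab
    · intro t ht _
      simp only [mem_Icc] at ht
      exact (hd t (mem_Icc.mpr ⟨ht.1, le_trans ht.2 hbm⟩)).le
  rw [hx] at hpos
  have hpos' : max (S (i-1)) (D (j-1)) < min (S i) (D j) := by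
    rcases lt_max_iff.mp hpos with h | h
    · exact absurd h (lt_irrefl 0)
    · linarith
  have h1 : D (j-1) < S i := lt_of_le_of_lt (le_max_right _ _) (lt_of_lt_of_le hpos' (min_le_left _ _))
  have h2 : D l ≤ D (j-1) := hDmono l (j-1) (Nat.le_sub_one_of_lt hlj) (Nat.sub_le_of_le_add (by omega))
  have h3 : S i ≤ S (k-1) := hSmono i (k-1) (Nat.le_sub_one_of_lt hik) (by omega)
  rw [hx]
  have : min (S k) (D l) ≤ max (S (k-1)) (D (l-1)) :=
    le_trans (min_le_right _ _) (le_trans h2 (le_trans h1.le (le_trans h3 (le_max_left _ _))))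
  simp [max_eq_left (by linarith : min (S k) (D l) - max (S (k-1)) (D (l-1)) ≤ 0)]
end

section
/- The north-west corner solution x_{ij} = max(0, min(S_i, D_j) − max(S_{i−1}, D_{j−1})) of a balanced 1D transportation problem has no hole: if x_{ik} > 0 and x_{il} > 0 with k < j < l, then x_{ij} = d_j. -/
open Finset in
theorem northwest_corner_nohole (n m : ℕ)
    (s d : ℕ → ℝ)
    (hs : ∀ i ∈ Icc 1 n, 0 < s i) (hd : ∀ j ∈ Icc 1 m, 0 < d j)
    (S D : ℕ → ℝ)
    (hS : ∀ i, S i = ∑ k ∈ Icc 1 i, s k) (hD : ∀ j, D j = ∑ l ∈ Icc 1 j, d l)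
    (hbal : S n = D m)
    (x : ℕ → ℕ → ℝ)
    (hx : ∀ i j, x i j = max 0 (min (S i) (D j) - max (S (i-1)) (D (j-1)))) :
    ∀ i ∈ Icc 1 n, ∀ k ∈ Icc 1 m, ∀ l ∈ Icc 1 m, ∀ j,
      k < j → j < l → 0 < x i k → 0 < x i l → x i j = d j := by
  intro i hi k hk l hl j hkj hjl hxk hxl
  simp only [mem_Icc] at hi hk hl
  -- monotonicity of D on [0, m]
  have hDmono : ∀ a b : ℕ, a ≤ b → b ≤ m → D a ≤ D b := by
    intro a b hab hbm
    rw [hD, hD]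
    apply Finset.sum_le_sum_of_subset_of_nonneg
    · exact Finset.Icc_subset_Icc_right hab
    · intro t ht hnt
      simp only [mem_Icc] at ht
      exact (hd t (mem_Icc.mpr ⟨ht.1, ht.2.trans hbm⟩)).le
  have hjm : j ≤ m := le_trans (Nat.le_of_lt_succ (Nat.lt_succ_of_lt hjl)) (by omega)
  have hj1 : 1 ≤ j := by omega
  -- from x i k > 0 : S (i-1) < D k
  rw [hx] at hxk hxl
  have h1 : max (S (i-1)) (D (k-1)) < min (S i) (D k) :=
    sub_pos.mp ((lt_max_iff.mp hxk).resolve_left (lt_irrefl 0))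
  have h2 : max (S (i-1)) (D (l-1)) < min (S i) (D l) :=
    sub_pos.mp ((lt_max_iff.mp hxl).resolve_left (lt_irrefl 0))
  have hSDk : S (i-1) < D k := lt_of_le_of_lt (le_max_left _ _) (lt_of_lt_of_le h1 (min_le_right _ _))
  have hDlS : D (l-1) < S i := lt_of_le_of_lt (le_max_right _ _) (lt_of_lt_of_le h2 (min_le_left _ _))
  have hSle : S (i-1) ≤ D (j-1) :=
    hSDk.le.trans (hDmono k (j-1) (by omega) (by omega))
  have hDjS : D j < S i := lt_of_le_of_lt (hDmono j (l-1) (by omega) (by omega)) hDlS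
  have hdj : D j - D (j-1) = d j := by
    have : j - 1 + 1 = j := by omega
    rw [hD, hD, ← this, Finset.sum_Icc_succ_top (by omega), this]
    ring
  rw [hx]
  rw [min_eq_right hDjS.le, max_eq_right hSle, hdj,
    max_eq_right (hd j (mem_Icc.mpr ⟨hj1, hjm⟩)).le]
end

section
/- In a monotonic solution x of the 1D UOT with no hole, defining p_i = D_{j(i)−1} − ∑_{l < j(i)} ∑_k x_{kl} where j(i) is the smallest sink index with x_{i,j(i)} ≠ 0, the sequence (p_i) is nondecreasing and satisfies 0 ≤ p_i ≤ D_m − S_n for all i (i.e., every monotonic no-hole solution admits a positional encoding). -/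
open Finset in
theorem monotonic_nohole_admits_positional_encoding (n m : ℕ)
    (s d : ℕ → ℝ) (x : ℕ → ℕ → ℝ)
    (hs : ∀ i ∈ Icc 1 n, 0 < s i) (hd : ∀ j ∈ Icc 1 m, 0 < d j)
    (S D : ℕ → ℝ)
    (hS : ∀ i, S i = ∑ k ∈ Icc 1 i, s k) (hD : ∀ j, D j = ∑ l ∈ Icc 1 j, d l)
    (hub : S n ≤ D m)
    (hpos : ∀ i ∈ Icc 1 n, ∀ j ∈ Icc 1 m, 0 ≤ x i j)
    (hrow : ∀ i ∈ Icc 1 n, ∑ j ∈ Icc 1 m, x i j = s i)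
    (hcol : ∀ j ∈ Icc 1 m, ∑ i ∈ Icc 1 n, x i j ≤ d j)
    (hmono : ∀ i ∈ Icc 1 n, ∀ j ∈ Icc 1 n, ∀ k ∈ Icc 1 m, ∀ l ∈ Icc 1 m,
      i < j → k < l → 0 < x i l → x j k = 0)
    (hnohole : ∀ i ∈ Icc 1 n, ∀ k ∈ Icc 1 m, ∀ l ∈ Icc 1 m, k < l →
      0 < x i k → 0 < x i l → ∀ j, k < j → j < l → x i j = d j)
    (jfun : ℕ → ℕ)
    (hjfun : ∀ i ∈ Icc 1 n, jfun i ∈ Icc 1 m ∧ x i (jfun i) ≠ 0 ∧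
      ∀ l < jfun i, x i l = 0)
    (p : ℕ → ℝ)
    (hp : ∀ i, p i = D (jfun i - 1) - ∑ l ∈ Icc 1 (jfun i - 1), ∑ k ∈ Icc 1 n, x k l) :
    (∀ i ∈ Icc 1 (n-1), p i ≤ p (i+1)) ∧
    (∀ i ∈ Icc 1 n, 0 ≤ p i ∧ p i ≤ D m - S n) := by
  set c : ℕ → ℝ := fun l => ∑ k ∈ Icc 1 n, x k l with hc
  have hcle : ∀ l ∈ Icc 1 m, c l ≤ d l := hcol
  have htot : ∑ l ∈ Icc 1 m, c l = S n := by
    rw [hS, Finset.sum_comm]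
    exact Finset.sum_congr rfl hrow
  have hpf : ∀ i, p i = ∑ l ∈ Icc 1 (jfun i - 1), (d l - c l) := by
    intro i
    rw [hp, hD, Finset.sum_sub_distrib]
  have hmonof : ∀ a b : ℕ, a ≤ b → b ≤ m →
      ∑ l ∈ Icc 1 a, (d l - c l) ≤ ∑ l ∈ Icc 1 b, (d l - c l) := by
    intro a b hab hbm
    apply Finset.sum_le_sum_of_subset_of_nonneg (Finset.Icc_subset_Icc_right hab)
    intro l hl _
    have hlm : l ∈ Icc 1 m := Finset.Icc_subset_Icc_right hbm hl
    linarith [hcle l hlm]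
  have hxpos : ∀ i ∈ Icc 1 n, 0 < x i (jfun i) := by
    intro i hi
    obtain ⟨hjm, hne, _⟩ := hjfun i hi
    exact lt_of_le_of_ne (hpos i hi _ hjm) (Ne.symm hne)
  constructor
  · intro i hi
    simp only [Finset.mem_Icc] at hi
    have hin : i ∈ Icc 1 n := by simp only [Finset.mem_Icc]; omega
    have hi1n : i + 1 ∈ Icc 1 n := by simp only [Finset.mem_Icc]; omega
    obtain ⟨hjm, hne, hzero⟩ := hjfun i hin
    obtain ⟨hjm', hne', hzero'⟩ := hjfun (i+1) hi1n
    have hjle : jfun i ≤ jfun (i+1) := by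
      by_contra hlt
      push_neg at hlt
      exact hne' (hmono i hin (i+1) hi1n (jfun (i+1)) hjm' (jfun i) hjm
        (Nat.lt_succ_self i) hlt (hxpos i hin))
    rw [hpf, hpf]
    simp only [Finset.mem_Icc] at hjm'
    exact hmonof _ _ (by omega) (by omega)
  · intro i hi
    obtain ⟨hjm, hne, hzero⟩ := hjfun i hi
    simp only [Finset.mem_Icc] at hjm
    constructor
    · rw [hpf]
      have h0 : (0:ℝ) = ∑ l ∈ Icc 1 0, (d l - c l) := by simp
      rw [h0]
      exact hmonof 0 _ (Nat.zero_le _) (by omega)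
    · rw [hpf]
      have h1 := hmonof (jfun i - 1) m (by omega) le_rfl
      have h2 : ∑ l ∈ Icc 1 m, (d l - c l) = D m - S n := by
        rw [Finset.sum_sub_distrib, htot, hD]
      linarith
end
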